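/- In the two-timescale stochastic approximation setting with (θ_n,w_n)-dominated martingale difference noise, for every n ≥ n_0 and every ε > 0: Pr(G_n ∩ {‖L^{(θ)}_{n+1}‖ ≥ ε} | G'_{n_0}) ≤ 2d² exp(−ε²/(d³ L_θ a_{n+1})) and Pr(G_n ∩ {‖L^{(w)}_{n+1}‖ ≥ ε} | G'_{n_0}) ≤ 2d² exp(−ε²/(d³ L_w b_{n+1})), where a_{n+1} = Σ_{k=0}^n α_k² e^{−2q_1 Σ_{j=k+1}^n α_j}, b_{n+1} = Σ_{k=0}^n β_k² e^{−2q_2 Σ_{j=k+1}^n β_j}, and L_θ, L_w are explicit constants depending on C_θ, C_w, m_1, m_2, ‖W_1‖, ‖W_2^{-1}‖, C_R^θ R^θ, C_R^w R^w, ‖θ*‖, ‖w*‖. -/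

import Mathlib

open MeasureTheory Matrix ProbabilityTheory
open scoped BigOperators ENNReal NNReal RealInnerProductSpace

noncomputable section

abbrev E (d : ℕ) := EuclideanSpace ℝ (Fin d)

variable {d : ℕ}

def app (A : Matrix (Fin d) (Fin d) ℝ) (x : E d) : E d :=
  Matrix.toEuclideanCLM (𝕜 := ℝ) A x

def opNorm (A : Matrix (Fin d) (Fin d) ℝ) : ℝ :=
  ‖Matrix.toEuclideanCLM (𝕜 := ℝ) A‖

/-- Positive definiteness (not necessarily symmetric). -/
def PosDefNS (A : Matrix (Fin d) (Fin d) ℝ) : Prop :=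
  ∀ x : E d, x ≠ 0 → 0 < ⟪x, app A x⟫

def lambdaMin (A : Matrix (Fin d) (Fin d) ℝ) : ℝ :=
  ⨅ x : Metric.sphere (0 : E d) 1, ⟪(x : E d), app A (x : E d)⟫

/-- Stepsizes `(n+1)^{-a}`. -/
def steps (a : ℝ) (n : ℕ) : ℝ := ((n : ℝ) + 1) ^ (-a)

def h1 (v1 : E d) (Γ1 W1 : Matrix (Fin d) (Fin d) ℝ) (θ w : E d) : E d :=
  v1 - app Γ1 θ - app W1 w

def h2 (v2 : E d) (Γ2 W2 : Matrix (Fin d) (Fin d) ℝ) (θ w : E d) : E d :=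
  v2 - app Γ2 θ - app W2 w

def X1 (Γ1 Γ2 W1 W2 : Matrix (Fin d) (Fin d) ℝ) : Matrix (Fin d) (Fin d) ℝ :=
  Γ1 - W1 * W2⁻¹ * Γ2

def thetaStar (v1 v2 : E d) (Γ1 Γ2 W1 W2 : Matrix (Fin d) (Fin d) ℝ) : E d :=
  app (X1 Γ1 Γ2 W1 W2)⁻¹ (v1 - app (W1 * W2⁻¹) v2)

def wStar (v1 v2 : E d) (Γ1 Γ2 W1 W2 : Matrix (Fin d) (Fin d) ℝ) : E d :=
  app W2⁻¹ (v2 - app Γ2 (thetaStar v1 v2 Γ1 Γ2 W1 W2))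

/-- The matrix product `∏_{j=a}^{b} (I − c_j X)` (equal to `1` if `b < a`). -/
def Mprod (X : Matrix (Fin d) (Fin d) ℝ) (c : ℕ → ℝ) (a b : ℕ) :
    Matrix (Fin d) (Fin d) ℝ :=
  ((List.range' a (b + 1 - a)).map fun j => (1 : Matrix (Fin d) (Fin d) ℝ) - c j • X).prod

/-- The aggregated noise `L^{(θ)}_{n+1}` (as a function of `n₀` and `n`). -/
def Lth {Ω : Type*} (Γ1 Γ2 W1 W2 : Matrix (Fin d) (Fin d) ℝ) (α : ℝ)
    (M1 M2 : ℕ → Ω → E d) (n0 n : ℕ) (ω : Ω) : E d :=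
  ∑ k ∈ Finset.Icc n0 n,
    steps α k • app (Mprod (X1 Γ1 Γ2 W1 W2) (steps α) (k + 1) n)
      (M1 (k + 1) ω - app (W1 * W2⁻¹) (M2 (k + 1) ω))

/-- The aggregated noise `L^{(w)}_{n+1}` (as a function of `n₀` and `n`). -/
def Lww {Ω : Type*} (W2 : Matrix (Fin d) (Fin d) ℝ) (β : ℝ) (M2 : ℕ → Ω → E d)
    (n0 n : ℕ) (ω : Ω) : E d :=
  ∑ k ∈ Finset.Icc n0 n,
    steps β k • app (Mprod W2 (steps β) (k + 1) n) (M2 (k + 1) ω)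

variable {Ω : Type*} [MeasurableSpace Ω]

/-- The natural filtration `F_n = σ(θ₀, w₀, M⁽¹⁾₁, M⁽²⁾₁, …, M⁽¹⁾_n, M⁽²⁾_n)`. -/
def natF (θ0 w0 : Ω → E d) (M1 M2 : ℕ → Ω → E d) (n : ℕ) : MeasurableSpace Ω :=
  MeasurableSpace.comap θ0 inferInstance ⊔ MeasurableSpace.comap w0 inferInstance ⊔
    ⨆ k ∈ Set.Icc 1 n,
      (MeasurableSpace.comap (M1 k) inferInstance ⊔ MeasurableSpace.comap (M2 k) inferInstance)

/-!
Both sums are martingale transforms: the `k`-th summand is the `F_{k+1}`-measurable noise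
`M_{k+1}` multiplied by the deterministic matrix `α_k ∏_{j>k} (I - α_j X)`, so it has zero
conditional mean given `F_k`. These matrices decay like `C e^{-q Σ_{j>k} α_j}`, because
`‖I - s X‖ ≤ e^{-q s}` as soon as `s` is small, and on `G_k` the noise is bounded through its
linear growth condition. Cutting each increment off outside the `F_k`-event `G_k` keeps it a
martingale difference, now with a deterministic bound `c_k`; the conditional Azuma–Hoeffding
inequality on the `F_{n₀}`-event `G'_{n₀}`, applied to each coordinate and each sign, then gives
the bound with the factor `2d`.
-/

open Filter Topology

section Matrices

lemma norm_app_le (A : Matrix (Fin d) (Fin d) ℝ) (x : E d) : ‖app A x‖ ≤ opNorm A * ‖x‖ :=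
  (Matrix.toEuclideanCLM (𝕜 := ℝ) A).le_opNorm x

lemma opNorm_nonneg (A : Matrix (Fin d) (Fin d) ℝ) : 0 ≤ opNorm A := norm_nonneg _

lemma inner_app_transpose (X : Matrix (Fin d) (Fin d) ℝ) (x : E d) :
    ⟪x, app Xᵀ x⟫ = ⟪x, app X x⟫ := by
  have hadj : Matrix.toEuclideanCLM (𝕜 := ℝ) Xᵀ =
      ContinuousLinearMap.adjoint (Matrix.toEuclideanCLM (𝕜 := ℝ) X) := by
    rw [← ContinuousLinearMap.star_eq_adjoint, ← map_star]
    rfl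
  rw [app, hadj, ContinuousLinearMap.adjoint_inner_right, real_inner_comm]
  rfl

lemma inner_app_add_transpose (X : Matrix (Fin d) (Fin d) ℝ) (x : E d) :
    ⟪x, app (X + Xᵀ) x⟫ = 2 * ⟪x, app X x⟫ := by
  simp only [app, map_add, _root_.add_apply, inner_add_right]
  rw [← app, ← app, inner_app_transpose]
  ring

lemma PosDefNS.add_transpose {X : Matrix (Fin d) (Fin d) ℝ} (hX : PosDefNS X) :
    PosDefNS (X + Xᵀ) := fun x hx => by
  rw [inner_app_add_transpose]
  exact mul_pos two_pos (hX x hx)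

lemma lambdaMin_mul_sq_le_inner (A : Matrix (Fin d) (Fin d) ℝ) (x : E d) :
    lambdaMin A * ‖x‖ ^ 2 ≤ ⟪x, app A x⟫ := by
  rcases eq_or_ne x 0 with rfl | hx
  · simp [app]
  have hx0 : 0 < ‖x‖ := norm_pos_iff.mpr hx
  set u : E d := ‖x‖⁻¹ • x
  have hu : u ∈ Metric.sphere (0 : E d) 1 := by
    simp [u, norm_smul, hx0.ne']
  have hbdd : BddBelow (Set.range fun y : Metric.sphere (0 : E d) 1 => ⟪(y : E d), app A y⟫) := by
    refine ⟨-opNorm A, ?_⟩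
    rintro _ ⟨⟨y, hy⟩, rfl⟩
    have hy1 : ‖y‖ = 1 := by simpa using hy
    have := (abs_real_inner_le_norm y (app A y)).trans
      (mul_le_mul_of_nonneg_left (norm_app_le A y) (norm_nonneg y))
    rw [hy1] at this
    linarith [neg_abs_le ⟪y, app A y⟫]
  have hinf : lambdaMin A ≤ ⟪u, app A u⟫ := ciInf_le hbdd ⟨u, hu⟩
  have hscale : ⟪u, app A u⟫ = ‖x‖⁻¹ ^ 2 * ⟪x, app A x⟫ := by
    simp only [u, app, map_smul, inner_smul_left, inner_smul_right, RCLike.conj_to_real]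
    ring
  rw [hscale] at hinf
  calc lambdaMin A * ‖x‖ ^ 2 ≤ ‖x‖⁻¹ ^ 2 * ⟪x, app A x⟫ * ‖x‖ ^ 2 := by gcongr
    _ = ⟪x, app A x⟫ := by field_simp

lemma PosDefNS.lambdaMin_pos (hd : 0 < d) {A : Matrix (Fin d) (Fin d) ℝ} (hA : PosDefNS A) :
    0 < lambdaMin A := by
  have hcont : Continuous fun x : E d => ⟪x, app A x⟫ :=
    continuous_id.inner (Matrix.toEuclideanCLM (𝕜 := ℝ) A).continuous
  have : Nonempty (Fin d) := ⟨⟨0, hd⟩⟩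
  have hne : (Metric.sphere (0 : E d) 1).Nonempty := NormedSpace.sphere_nonempty.mpr zero_le_one
  obtain ⟨x₀, hx₀, hmin⟩ := (isCompact_sphere (0 : E d) 1).exists_isMinOn hne hcont.continuousOn
  have hx₀0 : x₀ ≠ 0 := ne_zero_of_mem_unit_sphere ⟨x₀, hx₀⟩
  have : Nonempty (Metric.sphere (0 : E d) 1) := hne.to_subtype
  exact (hA x₀ hx₀0).trans_le (le_ciInf fun y => hmin y.2)

lemma lambdaMin_add_transpose_div_two_mul_le (X : Matrix (Fin d) (Fin d) ℝ) (x : E d) :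
    lambdaMin (X + Xᵀ) / 2 * ‖x‖ ^ 2 ≤ ⟪x, app X x⟫ := by
  have := lambdaMin_mul_sq_le_inner (X + Xᵀ) x
  rw [inner_app_add_transpose] at this
  linarith

lemma measurable_app (A : Matrix (Fin d) (Fin d) ℝ) : Measurable (app A) :=
  (Matrix.toEuclideanCLM (𝕜 := ℝ) A).continuous.measurable

end Matrices

section StepProducts

lemma steps_pos (a : ℝ) (n : ℕ) : 0 < steps a n := by
  unfold steps; positivity

lemma steps_le_one {a : ℝ} (ha : 0 ≤ a) (n : ℕ) : steps a n ≤ 1 :=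
  Real.rpow_le_one_of_one_le_of_nonpos (by linarith [n.cast_nonneg (α := ℝ)]) (by linarith)

lemma tendsto_steps_atTop {a : ℝ} (ha : 0 < a) : Tendsto (steps a) atTop (𝓝 0) :=
  (tendsto_rpow_neg_atTop ha).comp
    (tendsto_atTop_add_const_right _ 1 tendsto_natCast_atTop_atTop)

lemma opNorm_list_prod_le (l : List (Matrix (Fin d) (Fin d) ℝ)) :
    opNorm l.prod ≤ (l.map opNorm).prod := by
  induction l with
  | nil => exact ContinuousLinearMap.norm_id_le.trans_eq' (by simp [opNorm]; rfl)
  | cons A l ih =>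
    simp only [List.prod_cons, List.map_cons, opNorm, map_mul] at ih ⊢
    exact (norm_mul_le _ _).trans (mul_le_mul_of_nonneg_left ih (norm_nonneg _))

lemma opNorm_Mprod_le_prod (X : Matrix (Fin d) (Fin d) ℝ) (c : ℕ → ℝ) (a b : ℕ) :
    opNorm (Mprod X c a b) ≤ ∏ j ∈ Finset.Icc a b, opNorm (1 - c j • X) := by
  refine (opNorm_list_prod_le _).trans_eq ?_
  rw [Nat.Icc_eq_range', Finset.prod_eq_multiset_prod, List.map_map]
  rfl

lemma opNorm_one_sub_smul_le_exp {X : Matrix (Fin d) (Fin d) ℝ} {q s : ℝ}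
    (hXq : ∀ x : E d, 2 * q * ‖x‖ ^ 2 ≤ ⟪x, app X x⟫) (hs0 : 0 ≤ s)
    (hs : s * opNorm X ^ 2 ≤ 2 * q) :
    opNorm (1 - s • X) ≤ Real.exp (-(q * s)) := by
  refine ContinuousLinearMap.opNorm_le_bound _ (Real.exp_nonneg _) fun x => ?_
  have happ : Matrix.toEuclideanCLM (𝕜 := ℝ) (1 - s • X) x = x - s • app X x := by
    simp [app]
  have hAx : ‖app X x‖ ^ 2 ≤ opNorm X ^ 2 * ‖x‖ ^ 2 := by
    rw [← mul_pow]; gcongr; exact norm_app_le X x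
  -- `‖x - s X x‖² = ‖x‖² - 2 s ⟪x, X x⟫ + s² ‖X x‖² ≤ (1 - 2 q s) ‖x‖² ≤ e^{-2qs} ‖x‖²`
  have hsq : ‖x - s • app X x‖ ^ 2 ≤ Real.exp (-(2 * q * s)) * ‖x‖ ^ 2 := by
    rw [norm_sub_sq_real, inner_smul_right, norm_smul, Real.norm_eq_abs, abs_of_nonneg hs0,
      mul_pow]
    have hexp := Real.add_one_le_exp (-(2 * q * s))
    have k1 := mul_le_mul_of_nonneg_left (hXq x) hs0
    have k2 := mul_le_mul_of_nonneg_left hAx (sq_nonneg s)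
    have k3 := mul_le_mul_of_nonneg_right hs (mul_nonneg hs0 (sq_nonneg ‖x‖))
    nlinarith [sq_nonneg ‖x‖]
  rw [happ]
  refine (pow_le_pow_iff_left₀ (norm_nonneg _) (by positivity) two_ne_zero).mp ?_
  refine hsq.trans_eq ?_
  rw [mul_pow, sq (Real.exp _), ← Real.exp_add]
  ring_nf

/-- The factors with large steps are bounded by `(1 + ‖X‖) e^{q}` times the target decay;
there are only finitely many of them. -/
lemma exists_opNorm_Mprod_le_exp {X : Matrix (Fin d) (Fin d) ℝ} {q : ℝ} (hq : 0 < q)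
    (hXq : ∀ x : E d, 2 * q * ‖x‖ ^ 2 ≤ ⟪x, app X x⟫) {c : ℕ → ℝ} (hc0 : ∀ j, 0 ≤ c j)
    (hc1 : ∀ j, c j ≤ 1) (hc : Tendsto c atTop (𝓝 0)) :
    ∃ C > 0, ∀ a b, opNorm (Mprod X c a b) ≤ C * Real.exp (-(q * ∑ j ∈ Finset.Icc a b, c j)) := by
  obtain ⟨N, hN⟩ := eventually_atTop.mp
    (hc.eventually (gt_mem_nhds (show 0 < 2 * q / (opNorm X ^ 2 + 1) by positivity)))
  set B := (1 + opNorm X) * Real.exp q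
  have hB : 1 ≤ B := one_le_mul_of_one_le_of_one_le (by linarith [opNorm_nonneg X])
    (Real.one_le_exp hq.le)
  have hfactor : ∀ j, opNorm (1 - c j • X) ≤ (if j < N then B else 1) * Real.exp (-(q * c j)) := by
    intro j
    split_ifs with hj
    · have hle : opNorm (1 - c j • X) ≤ 1 + opNorm X := by
        unfold opNorm
        rw [map_sub, map_smul]
        refine (norm_sub_le _ _).trans (add_le_add ?_ ?_)
        · exact ContinuousLinearMap.norm_id_le.trans_eq' (by simp; rfl)
        · refine (ContinuousLinearMap.opNorm_smul_le _ _).trans ?_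
          rw [Real.norm_eq_abs, abs_of_nonneg (hc0 j)]
          exact mul_le_of_le_one_left (norm_nonneg _) (hc1 j)
      calc opNorm (1 - c j • X) ≤ 1 + opNorm X := hle
        _ = B * Real.exp (-q) := by rw [mul_assoc, ← Real.exp_add]; simp
        _ ≤ B * Real.exp (-(q * c j)) := by
          gcongr; nlinarith [hc1 j]
    · have hsmall := hN j (not_lt.mp hj)
      rw [lt_div_iff₀ (by positivity)] at hsmall
      rw [one_mul]
      exact opNorm_one_sub_smul_le_exp hXq (hc0 j) (by nlinarith [hc0 j])
  refine ⟨B ^ N, by positivity, fun a b => ?_⟩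
  have hcount : ∏ j ∈ Finset.Icc a b, (if j < N then B else 1) ≤ B ^ N := by
    rw [Finset.prod_ite, Finset.prod_const, Finset.prod_const_one, mul_one]
    refine pow_le_pow_right₀ hB
      ((Finset.card_le_card fun j hj => ?_).trans_eq (Finset.card_range N))
    simp only [Finset.mem_filter] at hj
    exact Finset.mem_range.mpr hj.2
  calc opNorm (Mprod X c a b) ≤ ∏ j ∈ Finset.Icc a b, opNorm (1 - c j • X) :=
        opNorm_Mprod_le_prod X c a b
    _ ≤ ∏ j ∈ Finset.Icc a b, ((if j < N then B else 1) * Real.exp (-(q * c j))) :=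
        Finset.prod_le_prod (fun _ _ => opNorm_nonneg _) fun j _ => hfactor j
    _ ≤ B ^ N * Real.exp (-(q * ∑ j ∈ Finset.Icc a b, c j)) := by
        rw [Finset.prod_mul_distrib, ← Real.exp_sum, Finset.mul_sum, ← Finset.sum_neg_distrib]
        gcongr

lemma exists_opNorm_Mprod_steps_le (hd : 0 < d) {X : Matrix (Fin d) (Fin d) ℝ} (hX : PosDefNS X)
    {a : ℝ} (ha : 0 < a) :
    ∃ C > 0, ∀ k n, opNorm (Mprod X (steps a) k n) ≤
      C * Real.exp (-(lambdaMin (X + Xᵀ) / 4 * ∑ j ∈ Finset.Icc k n, steps a j)) :=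
  exists_opNorm_Mprod_le_exp (by linarith [hX.add_transpose.lambdaMin_pos hd])
    (fun x => by linarith [lambdaMin_add_transpose_div_two_mul_le X x])
    (fun j => (steps_pos a j).le) (steps_le_one ha.le) (tendsto_steps_atTop ha)

end StepProducts

section Azuma

variable {Ω : Type*} {m mΩ : MeasurableSpace Ω} {μ : Measure Ω}

lemma exp_mul_le_cosh_add_sinh_div_mul {x c : ℝ} (t : ℝ) (hc : 0 < c) (hx : |x| ≤ c) :
    Real.exp (t * x) ≤ Real.cosh (t * c) + Real.sinh (t * c) / c * x := by
  obtain ⟨hxl, hxr⟩ := abs_le.mp hx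
  have hconv := convexOn_exp.2 (Set.mem_univ (t * -c)) (Set.mem_univ (t * c))
    (div_nonneg (by linarith : 0 ≤ c - x) (by linarith : 0 ≤ 2 * c))
    (div_nonneg (by linarith : 0 ≤ c + x) (by linarith : 0 ≤ 2 * c))
    (by field_simp; ring)
  calc Real.exp (t * x)
      = Real.exp ((c - x) / (2 * c) * (t * -c) + (c + x) / (2 * c) * (t * c)) := by
        congr 1; field_simp; ring
    _ ≤ (c - x) / (2 * c) * Real.exp (t * -c) + (c + x) / (2 * c) * Real.exp (t * c) := hconv
    _ = Real.cosh (t * c) + Real.sinh (t * c) / c * x := by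
        rw [Real.cosh_eq, Real.sinh_eq, mul_neg]
        field_simp
        ring

lemma integrable_exp_mul_of_abs_le [IsFiniteMeasure μ] {f : Ω → ℝ} (hf : AEMeasurable f μ)
    {C : ℝ} (hC : ∀ ω, |f ω| ≤ C) (t : ℝ) : Integrable (fun ω => Real.exp (t * f ω)) μ :=
  integrable_exp_mul_of_mem_Icc hf (ae_of_all _ fun ω => abs_le.mp (hC ω))

lemma integrable_exp_mul_sum [IsFiniteMeasure μ] {D : ℕ → Ω → ℝ} {c : ℕ → ℝ} {s : Finset ℕ}
    (hD : ∀ k ∈ s, AEMeasurable (D k) μ) (hDc : ∀ k ∈ s, ∀ ω, |D k ω| ≤ c k) (t : ℝ) :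
    Integrable (fun ω => Real.exp (t * ∑ k ∈ s, D k ω)) μ :=
  integrable_exp_mul_of_abs_le (Finset.aemeasurable_fun_sum _ hD)
    (fun ω => (Finset.abs_sum_le_sum_abs _ _).trans (Finset.sum_le_sum fun k hk => hDc k hk ω)) t

/-- Conditional Hoeffding lemma. -/
lemma condExp_exp_mul_le_of_abs_le [IsFiniteMeasure μ] (hm : m ≤ mΩ) {D : Ω → ℝ} {c : ℝ}
    (hD : AEMeasurable D μ) (hc : 0 < c) (hDc : ∀ ω, |D ω| ≤ c) (hD0 : μ[D|m] =ᵐ[μ] 0)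
    (t : ℝ) :
    μ[fun ω => Real.exp (t * D ω)|m] ≤ᵐ[μ] fun _ => Real.exp (t ^ 2 * c ^ 2 / 2) := by
  set κ := Real.sinh (t * c) / c
  have hintD : Integrable D μ :=
    .of_bound hD.aestronglyMeasurable c (ae_of_all _ fun ω => (Real.norm_eq_abs _).trans_le (hDc ω))
  have hchord : μ[fun ω => Real.exp (t * D ω)|m] ≤ᵐ[μ] μ[fun ω => Real.cosh (t * c) + κ * D ω|m] :=
    condExp_mono (integrable_exp_mul_of_abs_le hD hDc t)
      ((integrable_const _).add (hintD.const_mul κ))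
      (ae_of_all _ fun ω => exp_mul_le_cosh_add_sinh_div_mul t hc (hDc ω))
  have hlin : μ[fun ω => Real.cosh (t * c) + κ * D ω|m] =ᵐ[μ] fun _ => Real.cosh (t * c) := by
    refine (condExp_add (integrable_const _) (hintD.const_mul κ) m).trans ?_
    filter_upwards [condExp_smul (m := m) (μ := μ) κ D, hD0] with ω hκ h0
    simp only [Pi.add_apply, condExp_const hm]
    rw [show (fun ω => κ * D ω) = κ • D from rfl, hκ]
    simp [h0]
  filter_upwards [hchord, hlin] with ω h1 h2
  refine h1.trans (h2.trans_le ((Real.cosh_le_exp_half_sq _).trans_eq ?_))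
  ring_nf

lemma condExp_exp_mul_add_le [IsFiniteMeasure μ] {m' : MeasurableSpace Ω} (hmm' : m ≤ m')
    (hm' : m' ≤ mΩ) {S D : Ω → ℝ} {C c : ℝ} (hS : StronglyMeasurable[m'] S)
    (hSC : ∀ ω, |S ω| ≤ C) (hD : AEMeasurable D μ) (hc : 0 < c) (hDc : ∀ ω, |D ω| ≤ c)
    (hD0 : μ[D|m'] =ᵐ[μ] 0) (t : ℝ) :
    μ[fun ω => Real.exp (t * (S ω + D ω))|m] ≤ᵐ[μ]
      fun ω => Real.exp (t ^ 2 * c ^ 2 / 2) * μ[fun ω => Real.exp (t * S ω)|m] ω := by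
  set K := Real.exp (t ^ 2 * c ^ 2 / 2)
  have hS' : AEMeasurable S μ := (hS.mono hm').measurable.aemeasurable
  have hexpS := integrable_exp_mul_of_abs_le hS' hSC t
  have hsplit : (fun ω => Real.exp (t * (S ω + D ω))) =
      (fun ω => Real.exp (t * S ω)) * fun ω => Real.exp (t * D ω) := by
    ext ω
    rw [Pi.mul_apply, ← Real.exp_add, mul_add]
  have hprod : Integrable (fun ω => Real.exp (t * (S ω + D ω))) μ :=
    integrable_exp_mul_of_abs_le (hS'.add hD)
      (fun ω => (abs_add_le _ _).trans (add_le_add (hSC ω) (hDc ω))) t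
  rw [hsplit] at hprod ⊢
  -- conditioning on `m'` first, `exp (t S)` comes out and `D` obeys the Hoeffding lemma
  have hinner : μ[(fun ω => Real.exp (t * S ω)) * fun ω => Real.exp (t * D ω)|m']
      ≤ᵐ[μ] fun ω => Real.exp (t * S ω) * K := by
    filter_upwards [condExp_mul_of_stronglyMeasurable_left
        (Real.continuous_exp.comp_stronglyMeasurable (hS.const_mul t)) hprod
        (integrable_exp_mul_of_abs_le hD hDc t),
      condExp_exp_mul_le_of_abs_le hm' hD hc hDc hD0 t] with ω h1 h2
    rw [h1]
    exact mul_le_mul_of_nonneg_left h2 (Real.exp_nonneg _)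
  filter_upwards [(condExp_condExp_of_le hmm' hm' (μ := μ)
      (f := (fun ω => Real.exp (t * S ω)) * fun ω => Real.exp (t * D ω))).symm,
    condExp_mono (m := m) integrable_condExp (hexpS.mul_const K) hinner,
    condExp_smul (m := m) (μ := μ) K (fun ω => Real.exp (t * S ω) : Ω → ℝ)] with ω h1 h2 h3
  rw [h1]
  refine h2.trans_eq ?_
  rw [show (fun ω => Real.exp (t * S ω) * K) = K • fun ω => Real.exp (t * S ω) from
    funext fun ω => mul_comm _ _, h3, Pi.smul_apply, smul_eq_mul]

/-- The Azuma–Hoeffding inequality in moment generating function form. -/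
lemma condExp_exp_mul_sum_le [IsFiniteMeasure μ] {ℱ : Filtration ℕ mΩ} {D : ℕ → Ω → ℝ}
    {c : ℕ → ℝ} {n0 : ℕ} (hD : ∀ k, n0 ≤ k → StronglyMeasurable[ℱ (k + 1)] (D k))
    (hc : ∀ k, n0 ≤ k → 0 < c k) (hDc : ∀ k, n0 ≤ k → ∀ ω, |D k ω| ≤ c k)
    (hD0 : ∀ k, n0 ≤ k → μ[D k|ℱ k] =ᵐ[μ] 0) (t : ℝ) {N : ℕ} (hN : n0 ≤ N) :
    μ[fun ω => Real.exp (t * ∑ k ∈ Finset.Ico n0 N, D k ω)|ℱ n0]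
      ≤ᵐ[μ] fun _ => Real.exp (t ^ 2 * (∑ k ∈ Finset.Ico n0 N, c k ^ 2) / 2) := by
  induction N, hN using Nat.le_induction with
  | base =>
    simp only [Finset.Ico_self, Finset.sum_empty, mul_zero, zero_div, Real.exp_zero,
      condExp_const (ℱ.le n0)]
    rfl
  | succ N hN ih =>
    have hstep := condExp_exp_mul_add_le (μ := μ) (ℱ.mono hN) (ℱ.le N)
      (Finset.stronglyMeasurable_fun_sum _ fun k hk =>
        (hD k (Finset.mem_Ico.mp hk).1).mono (ℱ.mono (Finset.mem_Ico.mp hk).2))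
      (fun ω => (Finset.abs_sum_le_sum_abs _ _).trans
        (Finset.sum_le_sum fun k hk => hDc k (Finset.mem_Ico.mp hk).1 ω))
      ((hD N hN).mono (ℱ.le _)).measurable.aemeasurable (hc N hN) (hDc N hN) (hD0 N hN) t
    simp_rw [Finset.sum_Ico_succ_top hN]
    filter_upwards [hstep, ih] with ω h1 h2
    refine h1.trans ((mul_le_mul_of_nonneg_left h2 (Real.exp_nonneg _)).trans_eq ?_)
    rw [← Real.exp_add]
    ring_nf

lemma measure_inter_le_of_condExp_exp_le [IsFiniteMeasure μ] (hm : m ≤ mΩ) {G : Set Ω}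
    (hG : MeasurableSet[m] G) {f : Ω → ℝ} {t a B : ℝ} (ht : 0 ≤ t) (hB : 0 ≤ B)
    (hint : Integrable (fun ω => Real.exp (t * f ω)) μ)
    (hmgf : μ[fun ω => Real.exp (t * f ω)|m] ≤ᵐ[μ] fun _ => B) :
    μ (G ∩ {ω | a ≤ f ω}) ≤ ENNReal.ofReal (Real.exp (-(t * a)) * B) * μ G := by
  have hmarkov := mul_meas_ge_le_integral_of_nonneg (μ := μ.restrict G)
    (ae_of_all _ fun ω => (Real.exp_pos (t * f ω)).le) hint.restrict (Real.exp (t * a))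
  have hsub : G ∩ {ω | a ≤ f ω} ⊆ {ω | Real.exp (t * a) ≤ Real.exp (t * f ω)} ∩ G :=
    fun ω ⟨hωG, hω⟩ => ⟨Real.exp_le_exp.mpr (mul_le_mul_of_nonneg_left hω ht), hωG⟩
  have hle : μ.real (G ∩ {ω | a ≤ f ω}) ≤
      (μ.restrict G).real {ω | Real.exp (t * a) ≤ Real.exp (t * f ω)} :=
    ENNReal.toReal_mono (measure_ne_top _ _)
      ((measure_mono hsub).trans (Measure.le_restrict_apply _ _))
  have hint_le : ∫ ω in G, Real.exp (t * f ω) ∂μ ≤ B * μ.real G := by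
    rw [← setIntegral_condExp hm hint hG]
    refine (setIntegral_mono_ae integrable_condExp.integrableOn
      (integrable_const B).integrableOn hmgf).trans_eq ?_
    rw [setIntegral_const, smul_eq_mul, mul_comm]
  have hreal : μ.real (G ∩ {ω | a ≤ f ω}) ≤ Real.exp (-(t * a)) * B * μ.real G := by
    rw [Real.exp_neg, mul_assoc, inv_mul_eq_div, le_div_iff₀' (Real.exp_pos _)]
    nlinarith [Real.exp_pos (t * a)]
  rw [← ofReal_measureReal (measure_ne_top μ _), ← ofReal_measureReal (measure_ne_top μ G),
    ← ENNReal.ofReal_mul (by positivity)]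
  exact ENNReal.ofReal_le_ofReal hreal

end Azuma

lemma exists_div_sqrt_le_abs_apply (hd : 0 < d) {v : E d} {ε : ℝ} (hε : 0 ≤ ε) (hv : ε ≤ ‖v‖) :
    ∃ i, ε / √d ≤ |v i| := by
  have : Nonempty (Fin d) := ⟨⟨0, hd⟩⟩
  have hsum : ∑ _i : Fin d, (ε / √d) ^ 2 ≤ ∑ i, ‖v i‖ ^ 2 := by
    rw [← EuclideanSpace.norm_sq_eq, Finset.sum_const, Finset.card_univ, Fintype.card_fin,
      nsmul_eq_mul, div_pow, Real.sq_sqrt (Nat.cast_nonneg d), mul_div_cancel₀ _ (by positivity)]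
    gcongr
  obtain ⟨i, -, hi⟩ := Finset.exists_le_of_sum_le Finset.univ_nonempty hsum
  refine ⟨i, ?_⟩
  rw [Real.norm_eq_abs, sq_abs] at hi
  simpa [abs_of_nonneg (by positivity : 0 ≤ ε / √d)] using sq_le_sq.mp hi

section AzumaHoeffding

variable {Ω : Type*} {mΩ : MeasurableSpace Ω} {μ : Measure Ω} [IsFiniteMeasure μ]
  {ℱ : Filtration ℕ mΩ} {c : ℕ → ℝ} {n0 n : ℕ} {G : Set Ω}

lemma measure_inter_sum_ge_le {D : ℕ → Ω → ℝ}
    (hD : ∀ k, n0 ≤ k → StronglyMeasurable[ℱ (k + 1)] (D k)) (hc : ∀ k, n0 ≤ k → 0 < c k)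
    (hDc : ∀ k, n0 ≤ k → ∀ ω, |D k ω| ≤ c k) (hD0 : ∀ k, n0 ≤ k → μ[D k|ℱ k] =ᵐ[μ] 0)
    (hG : MeasurableSet[ℱ n0] G) (hn : n0 ≤ n) {a : ℝ} (ha : 0 ≤ a) :
    μ (G ∩ {ω | a ≤ ∑ k ∈ Finset.Icc n0 n, D k ω}) ≤
      ENNReal.ofReal (Real.exp (-a ^ 2 / (2 * ∑ k ∈ Finset.Icc n0 n, c k ^ 2))) * μ G := by
  set V := ∑ k ∈ Finset.Icc n0 n, c k ^ 2
  have hV : 0 < V := Finset.sum_pos (fun k hk => pow_pos (hc k (Finset.mem_Icc.mp hk).1) 2)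
    ⟨n0, Finset.mem_Icc.mpr ⟨le_rfl, hn⟩⟩
  have hmgf := condExp_exp_mul_sum_le hD hc hDc hD0 (a / V) (N := n + 1) (by omega) (μ := μ)
  rw [Finset.Ico_add_one_right_eq_Icc] at hmgf
  have hint : Integrable (fun ω => Real.exp (a / V * ∑ k ∈ Finset.Icc n0 n, D k ω)) μ :=
    integrable_exp_mul_sum
      (fun k hk => ((hD k (Finset.mem_Icc.mp hk).1).mono (ℱ.le _)).measurable.aemeasurable)
      (fun k hk => hDc k (Finset.mem_Icc.mp hk).1) _
  -- the Chernoff parameter `t = a / V` optimizes `-t a + t² V / 2`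
  refine (measure_inter_le_of_condExp_exp_le (ℱ.le n0) hG (by positivity) (Real.exp_nonneg _)
    hint hmgf).trans_eq ?_
  rw [← Real.exp_add]
  congr 3
  field_simp
  simp only [V]
  ring

lemma measure_inter_abs_sum_ge_le {D : ℕ → Ω → ℝ}
    (hD : ∀ k, n0 ≤ k → StronglyMeasurable[ℱ (k + 1)] (D k)) (hc : ∀ k, n0 ≤ k → 0 < c k)
    (hDc : ∀ k, n0 ≤ k → ∀ ω, |D k ω| ≤ c k) (hD0 : ∀ k, n0 ≤ k → μ[D k|ℱ k] =ᵐ[μ] 0)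
    (hG : MeasurableSet[ℱ n0] G) (hn : n0 ≤ n) {a : ℝ} (ha : 0 ≤ a) :
    μ (G ∩ {ω | a ≤ |∑ k ∈ Finset.Icc n0 n, D k ω|}) ≤
      ENNReal.ofReal (2 * Real.exp (-a ^ 2 / (2 * ∑ k ∈ Finset.Icc n0 n, c k ^ 2))) * μ G := by
  have hneg := measure_inter_sum_ge_le (D := fun k ω => -D k ω) (fun k hk => (hD k hk).neg) hc
    (fun k hk ω => (abs_neg (D k ω)).trans_le (hDc k hk ω))
    (fun k hk => (condExp_neg (D k) (ℱ k)).trans (by filter_upwards [hD0 k hk] with ω h; simp [h]))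
    hG hn ha
  have hsub : G ∩ {ω | a ≤ |∑ k ∈ Finset.Icc n0 n, D k ω|} ⊆
      G ∩ {ω | a ≤ ∑ k ∈ Finset.Icc n0 n, D k ω} ∪
        G ∩ {ω | a ≤ ∑ k ∈ Finset.Icc n0 n, -D k ω} := by
    rintro ω ⟨hωG, hω : a ≤ |∑ k ∈ Finset.Icc n0 n, D k ω|⟩
    rcases le_abs'.mp hω with h | h
    · refine Or.inr ⟨hωG, ?_⟩
      change a ≤ ∑ k ∈ Finset.Icc n0 n, -D k ω
      rw [Finset.sum_neg_distrib]
      linarith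
    · exact Or.inl ⟨hωG, h⟩
  refine (measure_mono hsub).trans ((measure_union_le _ _).trans ?_)
  rw [ENNReal.ofReal_mul zero_le_two, ENNReal.ofReal_ofNat, mul_assoc, two_mul]
  exact add_le_add (measure_inter_sum_ge_le hD hc hDc hD0 hG hn ha) hneg

lemma measure_inter_norm_sum_ge_le (hd : 0 < d) {Z : ℕ → Ω → E d}
    (hZ : ∀ k, n0 ≤ k → StronglyMeasurable[ℱ (k + 1)] (Z k)) (hc : ∀ k, n0 ≤ k → 0 < c k)
    (hZc : ∀ k, n0 ≤ k → ∀ ω, ‖Z k ω‖ ≤ c k) (hZ0 : ∀ k, n0 ≤ k → μ[Z k|ℱ k] =ᵐ[μ] 0)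
    (hG : MeasurableSet[ℱ n0] G) (hn : n0 ≤ n) {ε : ℝ} (hε : 0 ≤ ε) :
    μ (G ∩ {ω | ε ≤ ‖∑ k ∈ Finset.Icc n0 n, Z k ω‖}) ≤
      ENNReal.ofReal (2 * d * Real.exp (-ε ^ 2 / (2 * d * ∑ k ∈ Finset.Icc n0 n, c k ^ 2))) *
        μ G := by
  set V := ∑ k ∈ Finset.Icc n0 n, c k ^ 2
  have hcoord : ∀ i, μ (G ∩ {ω | ε / √d ≤ |∑ k ∈ Finset.Icc n0 n, Z k ω i|}) ≤
      ENNReal.ofReal (2 * Real.exp (-(ε / √d) ^ 2 / (2 * V))) * μ G := fun i =>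
    measure_inter_abs_sum_ge_le (D := fun k ω => Z k ω i)
      (fun k hk => (EuclideanSpace.proj i).continuous.comp_stronglyMeasurable (hZ k hk)) hc
      (fun k hk ω => (PiLp.norm_apply_le (Z k ω) i).trans (hZc k hk ω))
      (fun k hk => by
        have hint : Integrable (Z k) μ := .of_bound
          ((hZ k hk).mono (ℱ.le _)).aestronglyMeasurable (c k) (ae_of_all _ (hZc k hk))
        refine ((EuclideanSpace.proj i).comp_condExp_comm hint).symm.trans ?_
        filter_upwards [hZ0 k hk] with ω h
        simp [h])
      hG hn (by positivity)
  have hsub : G ∩ {ω | ε ≤ ‖∑ k ∈ Finset.Icc n0 n, Z k ω‖} ⊆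
      ⋃ i, G ∩ {ω | ε / √d ≤ |∑ k ∈ Finset.Icc n0 n, Z k ω i|} := by
    rintro ω ⟨hωG, hω⟩
    obtain ⟨i, hi⟩ := exists_div_sqrt_le_abs_apply hd hε hω
    exact Set.mem_iUnion.mpr ⟨i, hωG, by simpa using hi⟩
  refine (measure_mono hsub).trans ((measure_iUnion_fintype_le _ _).trans
    ((Finset.sum_le_sum fun i _ => hcoord i).trans_eq ?_))
  rw [Finset.sum_const, Finset.card_univ, Fintype.card_fin, nsmul_eq_mul, ← mul_assoc,
    ← ENNReal.ofReal_natCast, ← ENNReal.ofReal_mul (Nat.cast_nonneg d), div_pow,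
    Real.sq_sqrt (Nat.cast_nonneg d)]
  congr 2
  have hd0 : (d : ℝ) ≠ 0 := by positivity
  rw [show -(ε ^ 2 / d) / (2 * V) = -ε ^ 2 / (2 * d * V) by field_simp]
  ring

end AzumaHoeffding

lemma two_mul_exp_neg_div_le {ε V L S : ℝ} (hd : 0 < d) (hV : 0 < V) (hVS : V ≤ L * S) :
    2 * d * Real.exp (-ε ^ 2 / (2 * d * V)) ≤
      2 * (d : ℝ) ^ 2 * Real.exp (-ε ^ 2 / ((d : ℝ) ^ 3 * (2 * L) * S)) := by
  have hd1 : (1 : ℝ) ≤ d := Nat.one_le_cast.mpr hd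
  have hLS : 0 < L * S := hV.trans_le hVS
  have hden : 2 * d * V ≤ (d : ℝ) ^ 3 * (2 * L) * S := by
    calc 2 * d * V ≤ 2 * d * (L * S) := by gcongr
      _ ≤ 2 * d * (L * S) * (d : ℝ) ^ 2 := le_mul_of_one_le_right (by positivity) (one_le_pow₀ hd1)
      _ = (d : ℝ) ^ 3 * (2 * L) * S := by ring
  gcongr ?_ * Real.exp ?_
  · nlinarith
  · rw [neg_div, neg_div, neg_le_neg_iff]
    exact div_le_div_of_nonneg_left (sq_nonneg ε) (by positivity) hden

section GoodEvents

variable {Ω : Type*} {mΩ : MeasurableSpace Ω} {μ : Measure Ω} [IsFiniteMeasure μ]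
  {ℱ : Filtration ℕ mΩ} {n0 n : ℕ} {G' : Set Ω} {Good : ℕ → Set Ω}

/-- The increments are only bounded on the decreasing events `Good k ∈ ℱ k`; cutting them off
outside `Good k` keeps them martingale differences without changing the sum on `Good n`. -/
lemma cond_inter_norm_sum_ge_le (hd : 0 < d) (hG' : MeasurableSet[ℱ n0] G')
    (hGood : ∀ k, MeasurableSet[ℱ k] (Good k))
    (hGood_anti : Antitone Good) {Y : ℕ → Ω → E d} {c : ℕ → ℝ}
    (hY : ∀ k, n0 ≤ k → StronglyMeasurable[ℱ (k + 1)] (Y k))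
    (hYint : ∀ k, n0 ≤ k → Integrable (Y k) μ) (hY0 : ∀ k, n0 ≤ k → μ[Y k|ℱ k] =ᵐ[μ] 0)
    (hc : ∀ k, n0 ≤ k → 0 < c k) (hYc : ∀ k, n0 ≤ k → ∀ ω ∈ Good k, ‖Y k ω‖ ≤ c k)
    (hn : n0 ≤ n) {ε : ℝ} (hε : 0 ≤ ε) :
    μ[Good n ∩ {ω | ε ≤ ‖∑ k ∈ Finset.Icc n0 n, Y k ω‖}|G'] ≤
      ENNReal.ofReal (2 * d * Real.exp (-ε ^ 2 / (2 * d * ∑ k ∈ Finset.Icc n0 n, c k ^ 2))) := by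
  set Z : ℕ → Ω → E d := fun k => (Good k).indicator (Y k)
  have hbound := measure_inter_norm_sum_ge_le hd (Z := Z)
    (fun k hk => (hY k hk).indicator (ℱ.mono k.le_succ _ (hGood k))) hc
    (fun k hk ω => by
      by_cases hω : ω ∈ Good k
      · simpa [Z, hω] using hYc k hk ω hω
      · simpa [Z, hω] using (hc k hk).le)
    (fun k hk => (condExp_indicator (hYint k hk) (hGood k)).trans
      (by filter_upwards [hY0 k hk] with ω h; simp [h]))
    hG' hn hε
  have hsub : G' ∩ (Good n ∩ {ω | ε ≤ ‖∑ k ∈ Finset.Icc n0 n, Y k ω‖}) ⊆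
      G' ∩ {ω | ε ≤ ‖∑ k ∈ Finset.Icc n0 n, Z k ω‖} := by
    rintro ω ⟨hωG', hωn, hω⟩
    refine ⟨hωG', ?_⟩
    change ε ≤ ‖∑ k ∈ Finset.Icc n0 n, Z k ω‖
    rwa [Finset.sum_congr rfl fun k hk => Set.indicator_of_mem
      (hGood_anti (Finset.mem_Icc.mp hk).2 hωn) _]
  rw [cond_apply (ℱ.le n0 _ hG'), ← ENNReal.div_eq_inv_mul]
  exact ENNReal.div_le_of_le_mul ((measure_mono hsub).trans hbound)

lemma cond_inter_norm_weighted_sum_ge_le (hd : 0 < d) (hG' : MeasurableSet[ℱ n0] G')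
    (hGood : ∀ k, MeasurableSet[ℱ k] (Good k))
    (hGood_anti : Antitone Good) {X : Matrix (Fin d) (Fin d) ℝ}
    {a q C K : ℝ} (hC : 0 < C) (hK : 0 < K)
    (hXC : ∀ k m, opNorm (Mprod X (steps a) k m) ≤
      C * Real.exp (-(q * ∑ j ∈ Finset.Icc k m, steps a j)))
    {N : ℕ → Ω → E d} (hN : ∀ k, Measurable[ℱ (k + 1)] (N (k + 1)))
    (hNint : ∀ k, Integrable (N (k + 1)) μ) (hN0 : ∀ k, μ[N (k + 1)|ℱ k] =ᵐ[μ] 0)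
    (hNK : ∀ k, n0 ≤ k → ∀ ω ∈ Good k, ‖N (k + 1) ω‖ ≤ K) (hn : n0 ≤ n) {ε : ℝ} (hε : 0 ≤ ε) :
    μ[Good n ∩ {ω | ε ≤ ‖∑ k ∈ Finset.Icc n0 n,
        steps a k • app (Mprod X (steps a) (k + 1) n) (N (k + 1) ω)‖}|G'] ≤
      ENNReal.ofReal (2 * (d : ℝ) ^ 2 * Real.exp (-ε ^ 2 / ((d : ℝ) ^ 3 * (2 * (C ^ 2 * K ^ 2)) *
        ∑ k ∈ Finset.range (n + 1), steps a k ^ 2 *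
          Real.exp (-(2 * q) * ∑ j ∈ Finset.Icc (k + 1) n, steps a j)))) := by
  set T : ℕ → E d →L[ℝ] E d := fun k =>
    steps a k • Matrix.toEuclideanCLM (𝕜 := ℝ) (Mprod X (steps a) (k + 1) n)
  set c : ℕ → ℝ := fun k =>
    steps a k * (C * Real.exp (-(q * ∑ j ∈ Finset.Icc (k + 1) n, steps a j)) * K)
  have hc : ∀ k, 0 < c k := fun k => by have := steps_pos a k; positivity
  have hsq : ∀ k, c k ^ 2 = C ^ 2 * K ^ 2 * (steps a k ^ 2 *
      Real.exp (-(2 * q) * ∑ j ∈ Finset.Icc (k + 1) n, steps a j)) := fun k => by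
    simp only [c, mul_pow, ← Real.exp_nat_mul]
    ring_nf
  have hV : ∑ k ∈ Finset.Icc n0 n, c k ^ 2 ≤ C ^ 2 * K ^ 2 * ∑ k ∈ Finset.range (n + 1),
      steps a k ^ 2 * Real.exp (-(2 * q) * ∑ j ∈ Finset.Icc (k + 1) n, steps a j) := by
    simp only [hsq, ← Finset.mul_sum]
    gcongr
    exact fun k hk => Finset.mem_range.mpr (Nat.lt_succ_of_le (Finset.mem_Icc.mp hk).2)
  refine (cond_inter_norm_sum_ge_le hd hG' hGood hGood_anti (Y := fun k ω => T k (N (k + 1) ω))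
    (fun k _ => ((T k).continuous.measurable.comp (hN k)).stronglyMeasurable)
    (fun k _ => (T k).integrable_comp (hNint k))
    (fun k _ => ((T k).comp_condExp_comm (hNint k)).symm.trans
      (by filter_upwards [hN0 k] with ω h; simp [h]))
    (fun k _ => hc k) (fun k hk ω hω => ?_) hn hε).trans
    (ENNReal.ofReal_le_ofReal (two_mul_exp_neg_div_le hd
      (Finset.sum_pos (fun k _ => pow_pos (hc k) 2) ⟨n0, Finset.mem_Icc.mpr ⟨le_rfl, hn⟩⟩) hV))
  calc ‖T k (N (k + 1) ω)‖ = steps a k * ‖app (Mprod X (steps a) (k + 1) n) (N (k + 1) ω)‖ := by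
        simp [T, app, norm_smul, abs_of_pos (steps_pos a k)]
    _ ≤ c k := by
        refine mul_le_mul_of_nonneg_left ((norm_app_le _ _).trans ?_) (steps_pos a k).le
        exact mul_le_mul (hXC _ _) (hNK k hk ω hω) (norm_nonneg _) (by positivity)

end GoodEvents

section TwoTimescale

variable {Ω : Type*} {mΩ : MeasurableSpace Ω} {θ0 w0 : Ω → E d} {M1 M2 : ℕ → Ω → E d}
  {θ w : ℕ → Ω → E d} {θs ws : E d} {r s : ℝ} {n0 : ℕ}

lemma measurableSet_norm_sub_le {m : MeasurableSpace Ω} {f : Ω → E d} (hf : Measurable[m] f)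
    (x₀ : E d) (r : ℝ) : MeasurableSet[m] {ω | ‖f ω - x₀‖ ≤ r} :=
  measurableSet_le (hf.sub_const x₀).norm measurable_const

lemma condExp_sub_app_eq_zero {μ : Measure Ω} {m : MeasurableSpace Ω} {f g : Ω → E d}
    (hf : Integrable f μ) (hg : Integrable g μ) (hf0 : μ[f|m] =ᵐ[μ] 0) (hg0 : μ[g|m] =ᵐ[μ] 0)
    (A : Matrix (Fin d) (Fin d) ℝ) : μ[fun ω => f ω - app A (g ω)|m] =ᵐ[μ] 0 := by
  set T := Matrix.toEuclideanCLM (𝕜 := ℝ) A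
  filter_upwards [condExp_sub hf (T.integrable_comp hg) m, (T.comp_condExp_comm hg (m := m)).symm,
    hf0, hg0] with ω h h' hf0ω hg0ω
  change μ[f - fun ω => T (g ω)|m] ω = 0
  rw [h, Pi.sub_apply]
  change μ[f|m] ω - μ[T ∘ g|m] ω = 0
  rw [h', Function.comp_apply, hf0ω, hg0ω]
  simp

lemma natF_mono : Monotone (natF θ0 w0 M1 M2) := fun _ _ hnm =>
  sup_le_sup le_rfl (biSup_mono fun _ hk => ⟨hk.1, hk.2.trans hnm⟩)

lemma natF_le (hθ0 : Measurable θ0) (hw0 : Measurable w0) (hM1 : ∀ n, Measurable (M1 n))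
    (hM2 : ∀ n, Measurable (M2 n)) (n : ℕ) : natF θ0 w0 M1 M2 n ≤ mΩ :=
  sup_le (sup_le hθ0.comap_le hw0.comap_le)
    (iSup₂_le fun k _ => sup_le (hM1 k).comap_le (hM2 k).comap_le)

def natFiltration (hθ0 : Measurable θ0) (hw0 : Measurable w0) (hM1 : ∀ n, Measurable (M1 n))
    (hM2 : ∀ n, Measurable (M2 n)) : Filtration ℕ mΩ :=
  ⟨natF θ0 w0 M1 M2, natF_mono, natF_le hθ0 hw0 hM1 hM2⟩

lemma measurable_natF_noise (n : ℕ) :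
    Measurable[natF θ0 w0 M1 M2 (n + 1)] (M1 (n + 1)) ∧
      Measurable[natF θ0 w0 M1 M2 (n + 1)] (M2 (n + 1)) := by
  have hle := le_biSup (fun k => MeasurableSpace.comap (M1 k) inferInstance ⊔
    MeasurableSpace.comap (M2 k) inferInstance) (Set.mem_Icc.mpr ⟨n.succ_pos, le_rfl⟩)
  simp only [measurable_iff_comap_le]
  exact ⟨le_sup_left.trans (hle.trans le_sup_right), le_sup_right.trans (hle.trans le_sup_right)⟩

lemma measurable_natF_iterates {v1 v2 : E d} {Γ1 Γ2 W1 W2 : Matrix (Fin d) (Fin d) ℝ} {α β : ℝ}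
    (hθrec : ∀ (ω : Ω) (n : ℕ), θ (n + 1) ω =
      θ n ω + steps α n • (h1 v1 Γ1 W1 (θ n ω) (w n ω) + M1 (n + 1) ω))
    (hwrec : ∀ (ω : Ω) (n : ℕ), w (n + 1) ω =
      w n ω + steps β n • (h2 v2 Γ2 W2 (θ n ω) (w n ω) + M2 (n + 1) ω)) (n : ℕ) :
    Measurable[natF (θ 0) (w 0) M1 M2 n] (θ n) ∧ Measurable[natF (θ 0) (w 0) M1 M2 n] (w n) := by
  induction n with
  | zero =>
    simp only [measurable_iff_comap_le]
    exact ⟨le_sup_left.trans le_sup_left, le_sup_right.trans le_sup_left⟩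
  | succ n ih =>
    have hmono := natF_mono (θ0 := θ 0) (w0 := w 0) (M1 := M1) (M2 := M2) n.le_succ
    have hθ := ih.1.mono hmono le_rfl
    have hw := ih.2.mono hmono le_rfl
    obtain ⟨hM1, hM2⟩ := measurable_natF_noise (θ0 := θ 0) (w0 := w 0) (M1 := M1) (M2 := M2) n
    rw [funext fun ω => hθrec ω n, funext fun ω => hwrec ω n]
    simp only [h1, h2]
    exact ⟨hθ.add ((((measurable_const.sub ((measurable_app Γ1).comp hθ)).sub
        ((measurable_app W1).comp hw)).add hM1).fun_const_smul _),
      hw.add ((((measurable_const.sub ((measurable_app Γ2).comp hθ)).sub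
        ((measurable_app W2).comp hw)).add hM2).fun_const_smul _)⟩

def goodEvent (θ w : ℕ → Ω → E d) (θs ws : E d) (r s : ℝ) (n0 n : ℕ) : Set Ω :=
  {ω | ∀ k, n0 ≤ k → k ≤ n → ‖θ k ω - θs‖ ≤ r ∧ ‖w k ω - ws‖ ≤ s}

lemma goodEvent_antitone : Antitone (goodEvent θ w θs ws r s n0) :=
  fun _ _ hkn _ hω j hj hjk => hω j hj (hjk.trans hkn)

lemma measurableSet_goodEvent {ℱ : Filtration ℕ mΩ} (hθ : ∀ n, Measurable[ℱ n] (θ n))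
    (hw : ∀ n, Measurable[ℱ n] (w n)) (n : ℕ) :
    MeasurableSet[ℱ n] (goodEvent θ w θs ws r s n0 n) := by
  rw [goodEvent, Set.ofPred_forall]
  refine MeasurableSet.iInter fun k => ?_
  by_cases hk : k ≤ n
  · simp only [hk, forall_const]
    exact .imp (.const _) ((measurableSet_norm_sub_le ((hθ k).mono (ℱ.mono hk) le_rfl) θs r).inter
      (measurableSet_norm_sub_le ((hw k).mono (ℱ.mono hk) le_rfl) ws s))
  · simp [hk]

lemma norm_le_of_mem_goodEvent {M : ℕ → Ω → E d} {m : ℝ}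
    (hM : ∀ k ω, ‖M (k + 1) ω‖ ≤ m * (1 + ‖θ k ω‖ + ‖w k ω‖)) {k : ℕ} (hk : n0 ≤ k) {ω : Ω}
    (hω : ω ∈ goodEvent θ w θs ws r s n0 k) :
    ‖M (k + 1) ω‖ ≤ |m| * (1 + (‖θs‖ + r) + (‖ws‖ + s)) := by
  obtain ⟨hθ, hw⟩ := hω k hk le_rfl
  calc ‖M (k + 1) ω‖ ≤ |m| * (1 + ‖θ k ω‖ + ‖w k ω‖) :=
        (hM k ω).trans (mul_le_mul_of_nonneg_right (le_abs_self m) (by positivity))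
    _ ≤ |m| * (1 + (‖θs‖ + r) + (‖ws‖ + s)) := by
        gcongr
        · linarith [norm_le_norm_add_norm_sub' (θ k ω) θs]
        · linarith [norm_le_norm_add_norm_sub' (w k ω) ws]

end TwoTimescale

theorem stmt14_general {Ω : Type*} [MeasurableSpace Ω] (μ : Measure Ω) [IsProbabilityMeasure μ]
    {d : ℕ} (hd : 0 < d)
    (v1 v2 : E d) (Γ1 Γ2 W1 W2 : Matrix (Fin d) (Fin d) ℝ)
    (hA1W2 : PosDefNS W2) (hA1X1 : PosDefNS (X1 Γ1 Γ2 W1 W2))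
    (α β : ℝ) (hβ : 0 < β) (hβα : β < α)
    (Rθ Rw m1 m2 : ℝ)
    (hRθ : 0 < Rθ) (hRw : 0 < Rw)
    (q1 q2 : ℝ)
    (hq1 : q1 = lambdaMin (X1 Γ1 Γ2 W1 W2 + (X1 Γ1 Γ2 W1 W2)ᵀ) / 4)
    (hq2 : q2 = lambdaMin (W2 + W2ᵀ) / 4)
    (θ w : ℕ → Ω → E d) (M1 M2 : ℕ → Ω → E d)
    (hθrec : ∀ (ω : Ω) (n : ℕ), θ (n + 1) ω =
      θ n ω + steps α n • (h1 v1 Γ1 W1 (θ n ω) (w n ω) + M1 (n + 1) ω))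
    (hwrec : ∀ (ω : Ω) (n : ℕ), w (n + 1) ω =
      w n ω + steps β n • (h2 v2 Γ2 W2 (θ n ω) (w n ω) + M2 (n + 1) ω))
    (hθ0 : Measurable (θ 0)) (hw0 : Measurable (w 0))
    (hM1meas : ∀ n, Measurable (M1 n)) (hM2meas : ∀ n, Measurable (M2 n))
    (hM1int : ∀ n, Integrable (M1 (n + 1)) μ) (hM2int : ∀ n, Integrable (M2 (n + 1)) μ)
    (hM1mds : ∀ n, μ[M1 (n + 1) | natF (θ 0) (w 0) M1 M2 n] =ᵐ[μ] 0)
    (hM2mds : ∀ n, μ[M2 (n + 1) | natF (θ 0) (w 0) M1 M2 n] =ᵐ[μ] 0)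
    (hM1bdd : ∀ (n : ℕ) (ω : Ω), ‖M1 (n + 1) ω‖ ≤ m1 * (1 + ‖θ n ω‖ + ‖w n ω‖))
    (hM2bdd : ∀ (n : ℕ) (ω : Ω), ‖M2 (n + 1) ω‖ ≤ m2 * (1 + ‖θ n ω‖ + ‖w n ω‖))
    (n0 : ℕ) :
    ∃ (CRw Lθc Lwc : ℝ), 0 < CRw ∧ 0 < Lθc ∧ 0 < Lwc ∧
      ∀ n : ℕ, n0 ≤ n → ∀ ε : ℝ, 0 < ε →
        (μ[|{ω | ‖θ n0 ω - thetaStar v1 v2 Γ1 Γ2 W1 W2‖ ≤ Rθ ∧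
                 ‖w n0 ω - wStar v1 v2 Γ1 Γ2 W1 W2‖ ≤ Rw}])
          ({ω | ∀ k : ℕ, n0 ≤ k → k ≤ n →
              ‖θ k ω - thetaStar v1 v2 Γ1 Γ2 W1 W2‖ ≤ 3 * Rθ ∧
              ‖w k ω - wStar v1 v2 Γ1 Γ2 W1 W2‖ ≤ CRw * Rw} ∩
            {ω | ε ≤ ‖Lth Γ1 Γ2 W1 W2 α M1 M2 n0 n ω‖})
          ≤ ENNReal.ofReal (2 * (d : ℝ) ^ 2 *
              Real.exp (-ε ^ 2 / ((d : ℝ) ^ 3 * Lθc *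
                ∑ k ∈ Finset.range (n + 1), steps α k ^ 2 *
                  Real.exp (-(2 * q1) * ∑ j ∈ Finset.Icc (k + 1) n, steps α j)))) ∧
        (μ[|{ω | ‖θ n0 ω - thetaStar v1 v2 Γ1 Γ2 W1 W2‖ ≤ Rθ ∧
                 ‖w n0 ω - wStar v1 v2 Γ1 Γ2 W1 W2‖ ≤ Rw}])
          ({ω | ∀ k : ℕ, n0 ≤ k → k ≤ n →
              ‖θ k ω - thetaStar v1 v2 Γ1 Γ2 W1 W2‖ ≤ 3 * Rθ ∧
              ‖w k ω - wStar v1 v2 Γ1 Γ2 W1 W2‖ ≤ CRw * Rw} ∩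
            {ω | ε ≤ ‖Lww W2 β M2 n0 n ω‖})
          ≤ ENNReal.ofReal (2 * (d : ℝ) ^ 2 *
              Real.exp (-ε ^ 2 / ((d : ℝ) ^ 3 * Lwc *
                ∑ k ∈ Finset.range (n + 1), steps β k ^ 2 *
                  Real.exp (-(2 * q2) * ∑ j ∈ Finset.Icc (k + 1) n, steps β j)))) := by
  have hα : 0 < α := hβ.trans hβα
  set ℱ := natFiltration hθ0 hw0 hM1meas hM2meas
  have hadapted : ∀ n, Measurable[ℱ n] (θ n) ∧ Measurable[ℱ n] (w n) :=
    measurable_natF_iterates hθrec hwrec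
  set θs := thetaStar v1 v2 Γ1 Γ2 W1 W2
  set ws := wStar v1 v2 Γ1 Γ2 W1 W2
  have hG' : MeasurableSet[ℱ n0] {ω | ‖θ n0 ω - θs‖ ≤ Rθ ∧ ‖w n0 ω - ws‖ ≤ Rw} :=
    (measurableSet_norm_sub_le (hadapted n0).1 θs Rθ).inter
      (measurableSet_norm_sub_le (hadapted n0).2 ws Rw)
  have hG := measurableSet_goodEvent (θs := θs) (ws := ws) (r := 3 * Rθ) (s := 1 * Rw)
    (n0 := n0) (fun k => (hadapted k).1) (fun k => (hadapted k).2)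
  obtain ⟨Cθ, hCθ, hθprod⟩ := exists_opNorm_Mprod_steps_le hd hA1X1 hα
  obtain ⟨Cw, hCw, hwprod⟩ := exists_opNorm_Mprod_steps_le hd hA1W2 hβ
  subst hq1 hq2
  have hρ : 0 < 1 + (‖θs‖ + 3 * Rθ) + (‖ws‖ + 1 * Rw) := by positivity
  set ρ := 1 + (‖θs‖ + 3 * Rθ) + (‖ws‖ + 1 * Rw)
  set A := W1 * W2⁻¹
  have hA := opNorm_nonneg A
  -- nothing depends on the radius of `G_n` in `w`, so `C_R^w = 1` will do
  refine ⟨1, 2 * (Cθ ^ 2 * (|m1| * ρ + opNorm A * (|m2| * ρ) + 1) ^ 2),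
    2 * (Cw ^ 2 * (|m2| * ρ + 1) ^ 2), one_pos, by positivity, by positivity,
    fun n hn ε hε => ⟨?_, ?_⟩⟩
  · refine cond_inter_norm_weighted_sum_ge_le hd hG' hG goodEvent_antitone hCθ (by positivity)
      hθprod (N := fun k ω => M1 k ω - app A (M2 k ω))
      (fun k => (measurable_natF_noise k).1.sub
        ((measurable_app A).comp (measurable_natF_noise k).2))
      (fun k => (hM1int k).sub ((Matrix.toEuclideanCLM (𝕜 := ℝ) A).integrable_comp (hM2int k)))
      (fun k => condExp_sub_app_eq_zero (hM1int k) (hM2int k) (hM1mds k) (hM2mds k) A)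
      (fun k hk ω hω => (norm_sub_le _ _).trans ?_) hn hε.le
    linarith [norm_app_le A (M2 (k + 1) ω), norm_le_of_mem_goodEvent hM1bdd hk hω,
      mul_le_mul_of_nonneg_left (norm_le_of_mem_goodEvent hM2bdd hk hω) hA]
  · exact cond_inter_norm_weighted_sum_ge_le hd hG' hG goodEvent_antitone hCw (by positivity)
      hwprod (N := M2) (fun k => (measurable_natF_noise k).2) hM2int hM2mds
      (fun k hk ω hω => (norm_le_of_mem_goodEvent hM2bdd hk hω).trans (le_add_of_nonneg_right
        zero_le_one)) hn hε.le

/-- Lemma `azuma-hoeffding`.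
For every `n ≥ n₀` and every `ε > 0`,
`Pr (G_n ∩ {‖L^{(θ)}_{n+1}‖ ≥ ε} | G'_{n₀}) ≤ 2d² exp (−ε²/(d³ L_θ a_{n+1}))` and
`Pr (G_n ∩ {‖L^{(w)}_{n+1}‖ ≥ ε} | G'_{n₀}) ≤ 2d² exp (−ε²/(d³ L_w b_{n+1}))`, where
`a_{n+1} = Σ_{k=0}^n α_k² e^{−2q₁ Σ_{j=k+1}^n α_j}`,
`b_{n+1} = Σ_{k=0}^n β_k² e^{−2q₂ Σ_{j=k+1}^n β_j}`, and `L_θ, L_w`, `C_R^w` are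
explicit positive constants (`C_R^θ = 3`). -/
theorem stmt14 {Ω : Type*} [MeasurableSpace Ω] (μ : Measure Ω) [IsProbabilityMeasure μ]
    {d : ℕ} (hd : 0 < d)
    (v1 v2 : E d) (Γ1 Γ2 W1 W2 : Matrix (Fin d) (Fin d) ℝ)
    (hA1W2 : PosDefNS W2) (hA1X1 : PosDefNS (X1 Γ1 Γ2 W1 W2))
    (α β : ℝ) (hβ : 0 < β) (hβα : β < α) (hα : α < 1)
    (p δ Rθ Rw m1 m2 : ℝ)
    (hp : 1 < p) (hδ0 : 0 < δ) (hδ1 : δ < 1) (hRθ : 0 < Rθ) (hRw : 0 < Rw)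
    (q1 q2 : ℝ)
    (hq1 : q1 = lambdaMin (X1 Γ1 Γ2 W1 W2 + (X1 Γ1 Γ2 W1 W2)ᵀ) / 4)
    (hq2 : q2 = lambdaMin (W2 + W2ᵀ) / 4)
    (θ w : ℕ → Ω → E d) (M1 M2 : ℕ → Ω → E d)
    (hθrec : ∀ (ω : Ω) (n : ℕ), θ (n + 1) ω =
      θ n ω + steps α n • (h1 v1 Γ1 W1 (θ n ω) (w n ω) + M1 (n + 1) ω))
    (hwrec : ∀ (ω : Ω) (n : ℕ), w (n + 1) ω =
      w n ω + steps β n • (h2 v2 Γ2 W2 (θ n ω) (w n ω) + M2 (n + 1) ω))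
    (hθ0 : Measurable (θ 0)) (hw0 : Measurable (w 0))
    (hM1meas : ∀ n, Measurable (M1 n)) (hM2meas : ∀ n, Measurable (M2 n))
    (hM1int : ∀ n, Integrable (M1 (n + 1)) μ) (hM2int : ∀ n, Integrable (M2 (n + 1)) μ)
    (hM1mds : ∀ n, μ[M1 (n + 1) | natF (θ 0) (w 0) M1 M2 n] =ᵐ[μ] 0)
    (hM2mds : ∀ n, μ[M2 (n + 1) | natF (θ 0) (w 0) M1 M2 n] =ᵐ[μ] 0)
    (hM1bdd : ∀ (n : ℕ) (ω : Ω), ‖M1 (n + 1) ω‖ ≤ m1 * (1 + ‖θ n ω‖ + ‖w n ω‖))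
    (hM2bdd : ∀ (n : ℕ) (ω : Ω), ‖M2 (n + 1) ω‖ ≤ m2 * (1 + ‖θ n ω‖ + ‖w n ω‖))
    (n0 : ℕ)
    (hG' : μ {ω | ‖θ n0 ω - thetaStar v1 v2 Γ1 Γ2 W1 W2‖ ≤ Rθ ∧
                  ‖w n0 ω - wStar v1 v2 Γ1 Γ2 W1 W2‖ ≤ Rw} ≠ 0) :
    ∃ (CRw Lθc Lwc : ℝ), 0 < CRw ∧ 0 < Lθc ∧ 0 < Lwc ∧
      ∀ n : ℕ, n0 ≤ n → ∀ ε : ℝ, 0 < ε →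
        (μ[|{ω | ‖θ n0 ω - thetaStar v1 v2 Γ1 Γ2 W1 W2‖ ≤ Rθ ∧
                 ‖w n0 ω - wStar v1 v2 Γ1 Γ2 W1 W2‖ ≤ Rw}])
          ({ω | ∀ k : ℕ, n0 ≤ k → k ≤ n →
              ‖θ k ω - thetaStar v1 v2 Γ1 Γ2 W1 W2‖ ≤ 3 * Rθ ∧
              ‖w k ω - wStar v1 v2 Γ1 Γ2 W1 W2‖ ≤ CRw * Rw} ∩
            {ω | ε ≤ ‖Lth Γ1 Γ2 W1 W2 α M1 M2 n0 n ω‖})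
          ≤ ENNReal.ofReal (2 * (d : ℝ) ^ 2 *
              Real.exp (-ε ^ 2 / ((d : ℝ) ^ 3 * Lθc *
                ∑ k ∈ Finset.range (n + 1), steps α k ^ 2 *
                  Real.exp (-(2 * q1) * ∑ j ∈ Finset.Icc (k + 1) n, steps α j)))) ∧
        (μ[|{ω | ‖θ n0 ω - thetaStar v1 v2 Γ1 Γ2 W1 W2‖ ≤ Rθ ∧
                 ‖w n0 ω - wStar v1 v2 Γ1 Γ2 W1 W2‖ ≤ Rw}])
          ({ω | ∀ k : ℕ, n0 ≤ k → k ≤ n →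
              ‖θ k ω - thetaStar v1 v2 Γ1 Γ2 W1 W2‖ ≤ 3 * Rθ ∧
              ‖w k ω - wStar v1 v2 Γ1 Γ2 W1 W2‖ ≤ CRw * Rw} ∩
            {ω | ε ≤ ‖Lww W2 β M2 n0 n ω‖})
          ≤ ENNReal.ofReal (2 * (d : ℝ) ^ 2 *
              Real.exp (-ε ^ 2 / ((d : ℝ) ^ 3 * Lwc *
                ∑ k ∈ Finset.range (n + 1), steps β k ^ 2 *
                  Real.exp (-(2 * q2) * ∑ j ∈ Finset.Icc (k + 1) n, steps β j)))) :=
  stmt14_general μ hd v1 v2 Γ1 Γ2 W1 W2 hA1W2 hA1X1 α β hβ hβα Rθ Rw m1 m2 hRθ hRw q1 q2 hq1 hq2 θ w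
    M1 M2 hθrec hwrec hθ0 hw0 hM1meas hM2meas hM1int hM2int hM1mds hM2mds hM1bdd hM2bdd n0
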